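/- Let p be a probability mass function on the positive integers with p_j monotonically nonincreasing, and suppose there exist M > 0 and α ∈ (0,1) with p_j ≤ M j^{−1/α} for all j. Let X, Z₁, ..., Z_n be i.i.d. with distribution p and set m_X = #{i ≤ n : Z_i = X}, so that conditionally on X, m_X ~ Binomial(n, p(X)). Then there exists a constant C > 0 such that for all n ≥ 2, | E_X[ p(X) ( Var[ 1/(m_X + 1) | X ] − 2 Cov[ J(n) − J(m_X), 1/(m_X + 1) | X ] ) ] | ≤ C (log n) / n^{2−α}. -/

import Mathlib

open Filter Asymptotics

/-- `J m` is the `m`-th harmonic number, with `J 0 = 0`. -/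
noncomputable def J (m : ℕ) : ℝ := ∑ k ∈ Finset.range m, (1 : ℝ) / (k + 1)

/-- `mcount x i` is the number of occurrences of the symbol `x i` in the sample `x`. -/
def mcount {n : ℕ} (x : Fin n → ℕ+) (i : Fin n) : ℕ :=
  (Finset.univ.filter fun k => x k = x i).card

/-- The harmonic entropy estimator. -/
noncomputable def Hhat {n : ℕ} (x : Fin n → ℕ+) : ℝ :=
  ((n : ℝ))⁻¹ * ∑ i, (J (n - 1) - J (mcount x i - 1))

/-- The probability that an i.i.d. sample of size `n` from the pmf `p` equals `x`. -/
noncomputable def Pn {n : ℕ} (p : ℕ+ → ℝ) (x : Fin n → ℕ+) : ℝ := ∏ i, p (x i)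

/-- The expectation of the harmonic entropy estimator over an i.i.d. sample of size `n`. -/
noncomputable def EHhat (p : ℕ+ → ℝ) (n : ℕ) : ℝ := ∑' x : Fin n → ℕ+, Pn p x * Hhat x

/-- The Shannon entropy of the pmf `p`. -/
noncomputable def Hent (p : ℕ+ → ℝ) : ℝ := -∑' j : ℕ+, p j * Real.log (p j)

/-- Expectation of `f M` for `M ~ Binomial(n, q)`. -/
noncomputable def Bexp (n : ℕ) (q : ℝ) (f : ℕ → ℝ) : ℝ :=
  ∑ m ∈ Finset.range (n + 1), f m * (n.choose m : ℝ) * q ^ m * (1 - q) ^ (n - m)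

/-! For `M ~ Binomial(n, q)` and `x = (n + 1) q`, the absorption identity
`x · E[f (M + 1) / (M + 1)] = E_{n+1}[f] - f 0 · (1 - q)^(n+1)` and Pascal's rule turn
`x² (Var[1/(M+1)] - 2 Cov[J n - J M, 1/(M+1)])` into
`2q · x E[1/(M+1)] + 2x(1-q)^(n+1) (J n - E[J n - J M]) - (x E[1/(M+1)])² - x² E[1/(M+1)²]`,
four terms of fixed sign, each `O(J n) = O(log n)`. With the trivial bound this gives
`q² |Var - 2 Cov| ≲ log n · min(q², n⁻²)`. Summing over `q = p j`, the indices `j ≤ n^α`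
contribute `n^α · n⁻²`, and the tail `∑_{j > n^α} M² j^(-2/α)` is of the same order by
comparison with an integral. -/

open Finset

section Bexp

variable (n : ℕ) (q : ℝ)

lemma Bexp_const (c : ℝ) : Bexp n q (fun _ => c) = c := by
  have h : Bexp n q (fun _ => c) = c * (q + (1 - q)) ^ n := by
    rw [add_pow, Bexp, mul_sum]
    exact sum_congr rfl fun m _ => by ring
  simp [h]

lemma Bexp_add (f g : ℕ → ℝ) :
    Bexp n q (fun m => f m + g m) = Bexp n q f + Bexp n q g := by
  simp only [Bexp, ← sum_add_distrib]
  exact sum_congr rfl fun m _ => by ring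

lemma Bexp_sub (f g : ℕ → ℝ) :
    Bexp n q (fun m => f m - g m) = Bexp n q f - Bexp n q g := by
  simp only [Bexp, ← sum_sub_distrib]
  exact sum_congr rfl fun m _ => by ring

lemma Bexp_const_mul (c : ℝ) (f : ℕ → ℝ) :
    Bexp n q (fun m => c * f m) = c * Bexp n q f := by
  simp only [Bexp, mul_sum]
  exact sum_congr rfl fun m _ => by ring

variable {n q}

lemma Bexp_mono (hq0 : 0 ≤ q) (hq1 : q ≤ 1) {f g : ℕ → ℝ} (h : ∀ m ≤ n, f m ≤ g m) :
    Bexp n q f ≤ Bexp n q g := by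
  have h1q : 0 ≤ 1 - q := by linarith
  refine sum_le_sum fun m hm => ?_
  gcongr
  exact h m (Nat.lt_succ_iff.mp (mem_range.mp hm))

lemma Bexp_nonneg (hq0 : 0 ≤ q) (hq1 : q ≤ 1) {f : ℕ → ℝ} (h : ∀ m ≤ n, 0 ≤ f m) :
    0 ≤ Bexp n q f := by
  simpa only [Bexp_const] using Bexp_mono hq0 hq1 (f := fun _ => 0) h

lemma Bexp_le_const (hq0 : 0 ≤ q) (hq1 : q ≤ 1) {f : ℕ → ℝ} {c : ℝ} (h : ∀ m ≤ n, f m ≤ c) :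
    Bexp n q f ≤ c := by
  simpa only [Bexp_const] using Bexp_mono hq0 hq1 (g := fun _ => c) h

variable (n q)

lemma Bexp_succ_eq_sum_add (f : ℕ → ℝ) :
    Bexp (n + 1) q f = ∑ m ∈ range (n + 1),
      f (m + 1) * ((n + 1).choose (m + 1) : ℝ) * q ^ (m + 1) * (1 - q) ^ (n - m)
        + f 0 * (1 - q) ^ (n + 1) := by
  rw [Bexp, sum_range_succ']
  simp

lemma mul_Bexp_div_succ (f : ℕ → ℝ) :
    ((n : ℝ) + 1) * q * Bexp n q (fun m => f (m + 1) / ((m : ℝ) + 1))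
      = Bexp (n + 1) q f - f 0 * (1 - q) ^ (n + 1) := by
  rw [Bexp_succ_eq_sum_add, add_sub_cancel_right, Bexp, mul_sum]
  refine sum_congr rfl fun m _ => ?_
  have hchoose : ((n : ℝ) + 1) * n.choose m = (n + 1).choose (m + 1) * ((m : ℝ) + 1) := by
    exact_mod_cast Nat.add_one_mul_choose_eq n m
  field_simp
  linear_combination (f (m + 1) * q ^ (m + 1) * (1 - q) ^ (n - m)) * hchoose

lemma Bexp_succ (f : ℕ → ℝ) :
    Bexp (n + 1) q f = q * Bexp n q (fun m => f (m + 1)) + (1 - q) * Bexp n q f := by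
  have hfirst : q * Bexp n q (fun m => f (m + 1)) = ∑ m ∈ range (n + 1),
      f (m + 1) * (n.choose m : ℝ) * q ^ (m + 1) * (1 - q) ^ (n - m) := by
    rw [Bexp, mul_sum]
    exact sum_congr rfl fun m _ => by ring
  have hsecond : (1 - q) * Bexp n q f = ∑ m ∈ range (n + 1),
      f (m + 1) * (n.choose (m + 1) : ℝ) * q ^ (m + 1) * (1 - q) ^ (n - m)
        + f 0 * (1 - q) ^ (n + 1) := by
    rw [Bexp, mul_sum, sum_range_succ', sum_range_succ, Nat.choose_succ_self]
    simp only [Nat.cast_zero, mul_zero, zero_mul, add_zero, Nat.choose_zero_right, Nat.sub_zero]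
    congr 1
    · refine sum_congr rfl fun m hm => ?_
      rw [show n - m = n - (m + 1) + 1 by have := mem_range.mp hm; omega]
      ring
    · ring
  rw [Bexp_succ_eq_sum_add, hfirst, hsecond, ← add_assoc, ← sum_add_distrib]
  congr 1
  refine sum_congr rfl fun m _ => ?_
  rw [Nat.choose_succ_succ']
  push_cast
  ring

end Bexp

lemma J_succ (m : ℕ) : J (m + 1) = J m + 1 / ((m : ℝ) + 1) := sum_range_succ _ _

-- At `k = 0` both sides are `0`, by truncated subtraction and `1 / 0 = 0`.
lemma J_sub_J_pred (k : ℕ) : J k - J (k - 1) = 1 / (k : ℝ) := by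
  cases k with
  | zero => simp
  | succ m => rw [Nat.add_sub_cancel, J_succ]; push_cast; ring

lemma J_mono : Monotone J := fun _ _ h =>
  sum_le_sum_of_subset_of_nonneg (range_subset_range.mpr h) fun _ _ _ => by positivity

lemma J_nonneg (m : ℕ) : 0 ≤ J m := by simpa [J] using J_mono (Nat.zero_le m)

lemma J_le_one_add_log (n : ℕ) : J n ≤ 1 + Real.log n := by
  have hJ : J n = harmonic n := by simp [J, harmonic, one_div]
  exact hJ ▸ harmonic_le_one_add_log n

lemma three_add_two_mul_J_le {n : ℕ} (hn : 2 ≤ n) :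
    3 + 2 * J n ≤ (5 / Real.log 2 + 2) * Real.log n := by
  have hlog2 : 0 < Real.log 2 := Real.log_pos one_lt_two
  have hlog : Real.log 2 ≤ Real.log n := Real.log_le_log two_pos (by exact_mod_cast hn)
  have : 5 ≤ 5 / Real.log 2 * Real.log n := by
    rw [div_mul_eq_mul_div, le_div_iff₀ hlog2]; linarith
  linarith [J_le_one_add_log n]

lemma one_div_le_two_div_succ (k : ℕ) : 1 / (k : ℝ) ≤ 2 / ((k : ℝ) + 1) := by
  rcases Nat.eq_zero_or_pos k with rfl | hk
  · norm_num
  · have hk' : (1 : ℝ) ≤ k := by exact_mod_cast hk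
    rw [div_le_div_iff₀ (by positivity) (by positivity)]
    linarith

lemma mul_one_sub_pow_succ_le_one (n : ℕ) {q : ℝ} (hq0 : 0 ≤ q) (hq1 : q ≤ 1) :
    ((n : ℝ) + 1) * q * (1 - q) ^ (n + 1) ≤ 1 := by
  have hbern : 1 + ((n + 1 : ℕ) : ℝ) * q ≤ (1 + q) ^ (n + 1) := one_add_mul_le_pow (by linarith) _
  have hprod : (1 - q) ^ (n + 1) * (1 + q) ^ (n + 1) ≤ 1 := by
    rw [← mul_pow]
    exact pow_le_one₀ (by nlinarith) (by nlinarith)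
  push_cast at hbern
  nlinarith [pow_nonneg (sub_nonneg.mpr hq1) (n + 1)]

noncomputable def Bvar (n : ℕ) (q : ℝ) (f : ℕ → ℝ) : ℝ :=
  Bexp n q (fun m => f m ^ 2) - Bexp n q f ^ 2

noncomputable def Bcov (n : ℕ) (q : ℝ) (f g : ℕ → ℝ) : ℝ :=
  Bexp n q (fun m => f m * g m) - Bexp n q f * Bexp n q g

noncomputable def tiedRemainder (n : ℕ) (q : ℝ) : ℝ :=
  Bvar n q (fun m => 1 / ((m : ℝ) + 1))
    - 2 * Bcov n q (fun m => J n - J m) (fun m => 1 / ((m : ℝ) + 1))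

section TiedRemainder

variable (n : ℕ) (q : ℝ)

lemma mul_Bexp_inv_succ :
    ((n : ℝ) + 1) * q * Bexp n q (fun m => 1 / ((m : ℝ) + 1)) = 1 - (1 - q) ^ (n + 1) := by
  simpa [Bexp_const] using mul_Bexp_div_succ n q (fun _ => 1)

-- The `m = 0` boundary term vanishes because `1 / 0 = 0`.
lemma mul_Bexp_inv_succ_sq :
    ((n : ℝ) + 1) * q * Bexp n q (fun m => (1 / ((m : ℝ) + 1)) ^ 2)
      = Bexp (n + 1) q (fun k => 1 / (k : ℝ)) := by
  have h := mul_Bexp_div_succ n q (fun k => 1 / (k : ℝ))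
  simp only [Nat.cast_zero, div_zero, zero_mul, sub_zero] at h
  rw [← h]
  congr 2
  funext m
  push_cast
  ring

lemma mul_Bexp_harmonic_mul_inv_succ :
    ((n : ℝ) + 1) * q * Bexp n q (fun m => (J n - J m) * (1 / ((m : ℝ) + 1)))
      = Bexp n q (fun m => J n - J m) - q * Bexp n q (fun m => 1 / ((m : ℝ) + 1))
        + ((n : ℝ) + 1) * q * Bexp n q (fun m => (1 / ((m : ℝ) + 1)) ^ 2)
        - J n * (1 - q) ^ (n + 1) := by
  have hshift := mul_Bexp_div_succ n q (fun k => J n - J (k - 1))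
  have hJ0 : J 0 = 0 := sum_range_zero _
  simp only [Nat.add_sub_cancel, Nat.zero_sub, hJ0, sub_zero] at hshift
  have hpred : Bexp (n + 1) q (fun k => J n - J (k - 1))
      = Bexp (n + 1) q (fun k => J n - J k) + Bexp (n + 1) q (fun k => 1 / (k : ℝ)) := by
    rw [← Bexp_add]
    congr 1
    funext k
    rw [← J_sub_J_pred k]
    ring
  have hstep : Bexp (n + 1) q (fun k => J n - J k)
      = Bexp n q (fun m => J n - J m) - q * Bexp n q (fun m => 1 / ((m : ℝ) + 1)) := by
    have hsucc : Bexp n q (fun m => J n - J (m + 1))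
        = Bexp n q (fun m => J n - J m) - Bexp n q (fun m => 1 / ((m : ℝ) + 1)) := by
      rw [← Bexp_sub]
      simp only [J_succ, sub_add_eq_sub_sub]
    rw [Bexp_succ, hsucc]
    ring
  rw [mul_Bexp_inv_succ_sq, ← hstep, ← hpred, ← hshift]
  congr 2
  funext m
  ring

variable {n q}

lemma mul_Bexp_inv_succ_le_one (hq1 : q ≤ 1) :
    ((n : ℝ) + 1) * q * Bexp n q (fun m => 1 / ((m : ℝ) + 1)) ≤ 1 := by
  rw [mul_Bexp_inv_succ]
  linarith [pow_nonneg (sub_nonneg.mpr hq1) (n + 1)]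

lemma sq_mul_Bexp_inv_succ_sq_le_two (hq0 : 0 ≤ q) (hq1 : q ≤ 1) :
    (((n : ℝ) + 1) * q) ^ 2 * Bexp n q (fun m => (1 / ((m : ℝ) + 1)) ^ 2) ≤ 2 := by
  have hB : 0 ≤ Bexp (n + 1) q (fun k => 1 / ((k : ℝ) + 1)) :=
    Bexp_nonneg hq0 hq1 fun _ _ => by positivity
  have hnext := mul_Bexp_inv_succ_le_one (n := n + 1) hq1
  have hinv : Bexp (n + 1) q (fun k => 1 / (k : ℝ))
      ≤ 2 * Bexp (n + 1) q (fun k => 1 / ((k : ℝ) + 1)) := by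
    rw [← Bexp_const_mul]
    exact Bexp_mono hq0 hq1 fun k _ => by rw [mul_one_div]; exact one_div_le_two_div_succ k
  push_cast at hnext
  calc (((n : ℝ) + 1) * q) ^ 2 * Bexp n q (fun m => (1 / ((m : ℝ) + 1)) ^ 2)
      = ((n : ℝ) + 1) * q * Bexp (n + 1) q (fun k => 1 / (k : ℝ)) := by
        rw [← mul_Bexp_inv_succ_sq]; ring
    _ ≤ ((n : ℝ) + 1) * q * (2 * Bexp (n + 1) q (fun k => 1 / ((k : ℝ) + 1))) := by gcongr
    _ ≤ 2 * (((n : ℝ) + 1 + 1) * q * Bexp (n + 1) q (fun k => 1 / ((k : ℝ) + 1))) := by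
        nlinarith [mul_nonneg hq0 hB]
    _ ≤ 2 := by linarith

lemma abs_tiedRemainder_le (hq0 : 0 ≤ q) (hq1 : q ≤ 1) : |tiedRemainder n q| ≤ 1 + 2 * J n := by
  set EB := Bexp n q (fun m => 1 / ((m : ℝ) + 1))
  set EB2 := Bexp n q (fun m => (1 / ((m : ℝ) + 1)) ^ 2)
  set EA := Bexp n q (fun m => J n - J m)
  set EAB := Bexp n q (fun m => (J n - J m) * (1 / ((m : ℝ) + 1)))
  have hinv : ∀ m : ℕ, 0 ≤ 1 / ((m : ℝ) + 1) ∧ 1 / ((m : ℝ) + 1) ≤ 1 := fun m =>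
    ⟨by positivity, by rw [div_le_one (by positivity)]; linarith [(m.cast_nonneg : (0 : ℝ) ≤ m)]⟩
  have hdiff : ∀ m ≤ n, 0 ≤ J n - J m ∧ J n - J m ≤ J n := fun m hm =>
    ⟨sub_nonneg.mpr (J_mono hm), by linarith [J_nonneg m]⟩
  have hEB : 0 ≤ EB ∧ EB ≤ 1 :=
    ⟨Bexp_nonneg hq0 hq1 fun m _ => (hinv m).1, Bexp_le_const hq0 hq1 fun m _ => (hinv m).2⟩
  have hEB2 : 0 ≤ EB2 ∧ EB2 ≤ 1 :=
    ⟨Bexp_nonneg hq0 hq1 fun m _ => by positivity,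
      Bexp_le_const hq0 hq1 fun m _ => pow_le_one₀ (hinv m).1 (hinv m).2⟩
  have hEA : 0 ≤ EA ∧ EA ≤ J n :=
    ⟨Bexp_nonneg hq0 hq1 fun m hm => (hdiff m hm).1,
      Bexp_le_const hq0 hq1 fun m hm => (hdiff m hm).2⟩
  have hEAB : 0 ≤ EAB ∧ EAB ≤ J n :=
    ⟨Bexp_nonneg hq0 hq1 fun m hm => mul_nonneg (hdiff m hm).1 (hinv m).1,
      Bexp_le_const hq0 hq1 fun m hm =>
        (mul_le_of_le_one_right (hdiff m hm).1 (hinv m).2).trans (hdiff m hm).2⟩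
  have hEAEB : 0 ≤ EA * EB ∧ EA * EB ≤ J n :=
    ⟨mul_nonneg hEA.1 hEB.1, (mul_le_of_le_one_right hEA.1 hEB.2).trans hEA.2⟩
  have hEBsq : 0 ≤ EB ^ 2 ∧ EB ^ 2 ≤ 1 := ⟨sq_nonneg _, pow_le_one₀ hEB.1 hEB.2⟩
  rw [tiedRemainder, Bvar, Bcov, abs_le]
  constructor <;> linarith

lemma sq_mul_abs_tiedRemainder_le (hq0 : 0 ≤ q) (hq1 : q ≤ 1) :
    (((n : ℝ) + 1) * q) ^ 2 * |tiedRemainder n q| ≤ 3 + 2 * J n := by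
  set x := ((n : ℝ) + 1) * q
  set w := (1 - q) ^ (n + 1)
  set EB := Bexp n q (fun m => 1 / ((m : ℝ) + 1))
  set EB2 := Bexp n q (fun m => (1 / ((m : ℝ) + 1)) ^ 2)
  set EA := Bexp n q (fun m => J n - J m)
  have hmean : x * EB = 1 - w := mul_Bexp_inv_succ n q
  have hcross := mul_Bexp_harmonic_mul_inv_succ n q
  have hsplit : x ^ 2 * tiedRemainder n q
      = 2 * q * (x * EB) + 2 * (x * w) * (J n - EA) - (x * EB) ^ 2 - x ^ 2 * EB2 := by
    rw [tiedRemainder, Bvar, Bcov]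
    linear_combination (-2 * x) * hcross + 2 * x * EA * hmean
  have hx : 0 ≤ x := by positivity
  have hw : 0 ≤ w := pow_nonneg (sub_nonneg.mpr hq1) _
  have hw1 : w ≤ 1 := pow_le_one₀ (sub_nonneg.mpr hq1) (by linarith)
  have hxw : x * w ≤ 1 := mul_one_sub_pow_succ_le_one n hq0 hq1
  have hxEB : 0 ≤ x * EB ∧ x * EB ≤ 1 := ⟨by rw [hmean]; linarith, by rw [hmean]; linarith⟩
  have hEB2 : 0 ≤ EB2 := Bexp_nonneg hq0 hq1 fun m _ => by positivity
  have hxEB2 : x ^ 2 * EB2 ≤ 2 := sq_mul_Bexp_inv_succ_sq_le_two hq0 hq1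
  have hEA0 : 0 ≤ EA := Bexp_nonneg hq0 hq1 fun m hm => sub_nonneg.mpr (J_mono hm)
  have hEA1 : EA ≤ J n := Bexp_le_const hq0 hq1 fun m _ => sub_le_self _ (J_nonneg m)
  have hqxEB : q * (x * EB) ≤ 1 := by nlinarith
  have hxwJ : (x * w) * (J n - EA) ≤ J n := by nlinarith
  rw [← abs_of_nonneg (sq_nonneg x), ← abs_mul, hsplit, abs_le]
  constructor <;> nlinarith [mul_nonneg hq0 hxEB.1,
    mul_nonneg (mul_nonneg hx hw) (sub_nonneg.mpr hEA1), mul_nonneg (sq_nonneg x) hEB2]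

lemma sq_mul_abs_tiedRemainder_le_min (hq0 : 0 ≤ q) (hq1 : q ≤ 1) :
    q ^ 2 * |tiedRemainder n q| ≤ (3 + 2 * J n) * min (q ^ 2) (((n : ℝ) + 1)⁻¹ ^ 2) := by
  have hJ := J_nonneg n
  rw [mul_min_of_nonneg _ _ (by linarith)]
  refine le_min ?_ ?_
  · nlinarith [abs_tiedRemainder_le (n := n) hq0 hq1, sq_nonneg q]
  · have hfine := sq_mul_abs_tiedRemainder_le (n := n) hq0 hq1
    rw [inv_pow, ← div_eq_mul_inv, le_div_iff₀ (by positivity)]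
    linarith [show (((n : ℝ) + 1) * q) ^ 2 = q ^ 2 * ((n : ℝ) + 1) ^ 2 by ring]

end TiedRemainder

lemma sum_range_rpow_neg_le {a s : ℝ} (ha : 0 < a) (hs : 1 < s) (L : ℕ) :
    ∑ i ∈ range L, (a + ((i + 1 : ℕ) : ℝ)) ^ (-s) ≤ a ^ (1 - s) / (s - 1) := by
  have hanti : AntitoneOn (fun x : ℝ => x ^ (-s)) (Set.Icc a (a + L)) := fun x hx y _ hxy =>
    Real.rpow_le_rpow_of_nonpos (ha.trans_le hx.1) hxy (by linarith)
  have hzero : (0 : ℝ) ∉ Set.uIcc a (a + L) := by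
    rw [Set.uIcc_of_le (le_add_of_nonneg_right L.cast_nonneg)]
    exact fun h => (lt_irrefl 0) (ha.trans_le h.1)
  have hint := integral_rpow (a := a) (b := a + L) (r := -s) (Or.inr ⟨by linarith, hzero⟩)
  have htop : 0 ≤ (a + L) ^ (1 - s) := Real.rpow_nonneg (by positivity) _
  calc ∑ i ∈ range L, (a + ((i + 1 : ℕ) : ℝ)) ^ (-s)
      ≤ ∫ x in a..a + L, x ^ (-s) := hanti.sum_le_integral
    _ = (a ^ (1 - s) - (a + L) ^ (1 - s)) / (s - 1) := by
        have hflip : ∀ u v : ℝ, (v - u) / (1 - s) = (u - v) / (s - 1) := fun u v => by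
          rw [← neg_sub s 1, div_neg, ← neg_div, neg_sub]
        rw [hint, show -s + 1 = 1 - s by ring, hflip]
    _ ≤ a ^ (1 - s) / (s - 1) := by gcongr; linarith

lemma tsum_min_le_of_le_rpow (f : ℕ+ → ℝ) {B c s : ℝ} (hf0 : ∀ j, 0 ≤ f j) (hc : 0 ≤ c)
    (hs : 1 < s) (hf : ∀ j, f j ≤ B * (j : ℝ) ^ (-s)) {N : ℕ} (hN : 0 < N) :
    ∑' j, min (f j) c ≤ N * c + B * (N : ℝ) ^ (1 - s) / (s - 1) := by
  set F : ℕ → ℝ := fun i => min (f i.succPNat) c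
  have hF0 : ∀ i, 0 ≤ F i := fun i => le_min (hf0 _) hc
  have hFle : ∀ i, F i ≤ B * ((i + 1 : ℕ) : ℝ) ^ (-s) := fun i =>
    (min_le_left _ _).trans (hf i.succPNat)
  have hB : 0 ≤ B := by simpa using (hf0 1).trans (hf 1)
  have hFsum : Summable F := by
    refine Summable.of_nonneg_of_le hF0 hFle (Summable.mul_left B ?_)
    exact (summable_nat_add_iff 1).mpr (Real.summable_nat_rpow.mpr (by linarith))
  have hhead : ∑ i ∈ range N, F i ≤ N * c := by
    simpa using sum_le_sum fun i (_ : i ∈ range N) => min_le_right (f i.succPNat) c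
  have htail : ∑' i, F (i + N) ≤ B * (N : ℝ) ^ (1 - s) / (s - 1) := by
    refine Real.tsum_le_of_sum_range_le (fun i => hF0 _) fun L => ?_
    calc ∑ i ∈ range L, F (i + N)
        ≤ ∑ i ∈ range L, B * ((N : ℝ) + ((i + 1 : ℕ) : ℝ)) ^ (-s) :=
          sum_le_sum fun i _ => (hFle _).trans_eq (by push_cast; ring_nf)
      _ ≤ B * ((N : ℝ) ^ (1 - s) / (s - 1)) := by
          rw [← mul_sum]
          exact mul_le_mul_of_nonneg_left (sum_range_rpow_neg_le (by exact_mod_cast hN) hs L) hB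
      _ = B * (N : ℝ) ^ (1 - s) / (s - 1) := by ring
  calc ∑' j, min (f j) c = ∑' i, F i := (Equiv.pnatEquivNat.symm.tsum_eq _).symm
    _ = ∑ i ∈ range N, F i + ∑' i, F (i + N) := (hFsum.sum_add_tsum_nat_add N).symm
    _ ≤ N * c + B * (N : ℝ) ^ (1 - s) / (s - 1) := add_le_add hhead htail

lemma tsum_min_sq_le (p : ℕ+ → ℝ) (hp0 : ∀ j, 0 ≤ p j) {M α : ℝ} (hα0 : 0 < α) (hα2 : α < 2)
    (hbound : ∀ j : ℕ+, p j ≤ M * (j : ℝ) ^ (-(1 / α))) {n : ℕ} (hn : 0 < n) :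
    ∑' j, min (p j ^ 2) (((n : ℝ) + 1)⁻¹ ^ 2)
      ≤ (1 + M ^ 2 * 2 ^ (2 / α - 1) / (2 / α - 1)) * (n : ℝ) ^ (α - 2) := by
  have hs : 1 < 2 / α := by rw [lt_div_iff₀ hα0]; linarith
  have hsq : ∀ j : ℕ+, p j ^ 2 ≤ M ^ 2 * (j : ℝ) ^ (-(2 / α)) := fun j => by
    calc p j ^ 2 ≤ (M * (j : ℝ) ^ (-(1 / α))) ^ 2 := pow_le_pow_left₀ (hp0 j) (hbound j) 2
      _ = M ^ 2 * (j : ℝ) ^ (-(2 / α)) := by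
        rw [mul_pow, ← Real.rpow_mul_natCast (by positivity)]
        ring_nf
  have hn1 : (1 : ℝ) ≤ n := by exact_mod_cast hn
  have hnα : 1 ≤ (n : ℝ) ^ α := Real.one_le_rpow hn1 hα0.le
  set N := ⌊(n : ℝ) ^ α⌋₊
  have hN : 0 < N := Nat.floor_pos.mpr hnα
  have hNle : (N : ℝ) ≤ (n : ℝ) ^ α := Nat.floor_le (by positivity)
  have hNge : (n : ℝ) ^ α / 2 ≤ N := by
    have := Nat.sub_one_lt_floor ((n : ℝ) ^ α)
    have : (1 : ℝ) ≤ N := by exact_mod_cast hN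
    linarith
  have hhead : (N : ℝ) * ((n : ℝ) + 1)⁻¹ ^ 2 ≤ (n : ℝ) ^ (α - 2) := by
    calc (N : ℝ) * ((n : ℝ) + 1)⁻¹ ^ 2 ≤ (n : ℝ) ^ α * ((n : ℝ) ^ (2 : ℝ))⁻¹ := by
          rw [Real.rpow_two, ← inv_pow]
          gcongr
          linarith
      _ = (n : ℝ) ^ (α - 2) := by rw [Real.rpow_sub (by positivity), div_eq_mul_inv]
  have htail : (N : ℝ) ^ (1 - 2 / α) ≤ 2 ^ (2 / α - 1) * (n : ℝ) ^ (α - 2) := by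
    calc (N : ℝ) ^ (1 - 2 / α) ≤ ((n : ℝ) ^ α / 2) ^ (1 - 2 / α) :=
          Real.rpow_le_rpow_of_nonpos (by positivity) hNge (by linarith)
      _ = 2 ^ (2 / α - 1) * (n : ℝ) ^ (α - 2) := by
          rw [Real.div_rpow (by positivity) zero_le_two, ← Real.rpow_mul (by positivity),
            div_eq_mul_inv, ← Real.rpow_neg zero_le_two, neg_sub, mul_comm]
          congr 2
          field_simp
  calc ∑' j, min (p j ^ 2) (((n : ℝ) + 1)⁻¹ ^ 2)
      ≤ N * ((n : ℝ) + 1)⁻¹ ^ 2 + M ^ 2 * (N : ℝ) ^ (1 - 2 / α) / (2 / α - 1) :=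
        tsum_min_le_of_le_rpow _ (fun j => sq_nonneg _) (by positivity) hs hsq hN
    _ ≤ (n : ℝ) ^ (α - 2) + M ^ 2 * (2 ^ (2 / α - 1) * (n : ℝ) ^ (α - 2)) / (2 / α - 1) := by
        gcongr
    _ = (1 + M ^ 2 * 2 ^ (2 / α - 1) / (2 / α - 1)) * (n : ℝ) ^ (α - 2) := by ring

theorem tied_points_remainder_general (p : ℕ+ → ℝ)
    (hp0 : ∀ j, 0 ≤ p j) (hsum : ∑' j, p j = 1)
    (M α : ℝ) (hα : α ∈ Set.Ioo (0 : ℝ) 1)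
    (hbound : ∀ j : ℕ+, p j ≤ M * (j : ℝ) ^ (-(1 / α))) :
    ∃ C > 0, ∀ n : ℕ, 2 ≤ n →
      |∑' j : ℕ+, p j * (p j *
          ((Bexp n (p j) (fun m => (1 / (m + 1 : ℝ)) ^ 2)
              - (Bexp n (p j) (fun m => 1 / (m + 1 : ℝ))) ^ 2)
            - 2 * (Bexp n (p j) (fun m => (J n - J m) * (1 / (m + 1 : ℝ)))
              - Bexp n (p j) (fun m => J n - J m)
                * Bexp n (p j) (fun m => 1 / (m + 1 : ℝ)))))|
        ≤ C * Real.log n / (n : ℝ) ^ (2 - α) := by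
  obtain ⟨hα0, hα1⟩ := hα
  have hsp : Summable p := by
    by_contra h
    exact zero_ne_one ((tsum_eq_zero_of_not_summable h).symm.trans hsum)
  have hp1 : ∀ j, p j ≤ 1 := fun j => hsum ▸ hsp.le_tsum j fun k _ => hp0 k
  have hs : 0 < 2 / α - 1 := by rw [sub_pos, lt_div_iff₀ hα0]; linarith
  set A := 1 + M ^ 2 * 2 ^ (2 / α - 1) / (2 / α - 1)
  have hlog2 : 0 < Real.log 2 := Real.log_pos one_lt_two
  refine ⟨A * (5 / Real.log 2 + 2), by positivity, fun n hn => ?_⟩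
  set c := ((n : ℝ) + 1)⁻¹ ^ 2
  have hsummable : Summable fun j => (3 + 2 * J n) * min (p j ^ 2) c :=
    (hsp.of_nonneg_of_le (fun j => le_min (sq_nonneg _) (by positivity))
      fun j => (min_le_left _ _).trans (by nlinarith [hp0 j, hp1 j])).mul_left _
  calc |∑' j, p j * (p j * tiedRemainder n (p j))|
      ≤ ∑' j, (3 + 2 * J n) * min (p j ^ 2) c := by
        rw [← Real.norm_eq_abs]
        refine tsum_of_norm_bounded hsummable.hasSum fun j => ?_
        rw [Real.norm_eq_abs, ← mul_assoc, abs_mul, abs_of_nonneg (mul_self_nonneg _), ← sq]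
        exact sq_mul_abs_tiedRemainder_le_min (hp0 j) (hp1 j)
    _ = (3 + 2 * J n) * ∑' j, min (p j ^ 2) c := tsum_mul_left
    _ ≤ (5 / Real.log 2 + 2) * Real.log n * (A * (n : ℝ) ^ (α - 2)) :=
        mul_le_mul (three_add_two_mul_J_le hn)
          (tsum_min_sq_le p hp0 hα0 (by linarith) hbound (by omega))
          (tsum_nonneg fun j => le_min (sq_nonneg _) (by positivity)) (by positivity)
    _ = A * (5 / Real.log 2 + 2) * Real.log n / (n : ℝ) ^ (2 - α) := by
        rw [show α - 2 = -(2 - α) by ring, Real.rpow_neg (by positivity)]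
        ring

/-- remainder terms from tied sample points. Let `p` be a nonincreasing
pmf with `p j ≤ M j^{−1/α}`, `M > 0`, `α ∈ (0,1)`, and conditionally on `X = j` let
`m_X ~ Binomial(n, p j)`. Then
`|E_X[p(X)(Var[1/(m_X+1)|X] − 2 Cov[J(n) − J(m_X), 1/(m_X+1)|X])]| ≤ C (log n)/n^{2−α}`
for all `n ≥ 2`. -/
theorem tied_points_remainder (p : ℕ+ → ℝ)
    (hp0 : ∀ j, 0 ≤ p j) (hsum : ∑' j, p j = 1) (hmono : Antitone p)
    (M α : ℝ) (hM : 0 < M) (hα : α ∈ Set.Ioo (0 : ℝ) 1)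
    (hbound : ∀ j : ℕ+, p j ≤ M * (j : ℝ) ^ (-(1 / α))) :
    ∃ C > 0, ∀ n : ℕ, 2 ≤ n →
      |∑' j : ℕ+, p j * (p j *
          ((Bexp n (p j) (fun m => (1 / (m + 1 : ℝ)) ^ 2)
              - (Bexp n (p j) (fun m => 1 / (m + 1 : ℝ))) ^ 2)
            - 2 * (Bexp n (p j) (fun m => (J n - J m) * (1 / (m + 1 : ℝ)))
              - Bexp n (p j) (fun m => J n - J m)
                * Bexp n (p j) (fun m => 1 / (m + 1 : ℝ)))))|
        ≤ C * Real.log n / (n : ℝ) ^ (2 - α) :=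
  tied_points_remainder_general p hp0 hsum M α hα hbound
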